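/- Let δ > 0 and define the operator B_α on L²(S_δ) by B_α[h] = Σ_{m=2}^∞ m² A*_m[e^{-αm|·|} A_m[h]], where A_m[h](ξ) = H(mξ) χ_{S_δ \ (1-1/m)S_δ}(ξ) and H is the L²_loc extension of h via the Riesz basis. Then B_α is bounded with operator norm at most 4B⁴ e^{-αδ}(1 - e^{-αδ})^{-2}. -/

import Mathlib

/-!
Since `‖A_m*‖ = ‖A_m‖` and `‖A_m‖² ≤ 4(m-1)m⁻²B⁴`, the `m`-th term of `B_α[h]` has norm at most
`m² ‖A_m‖² e^{-αδ(m-1)} ‖h‖ ≤ 4B⁴ (m-1) r^{m-1} ‖h‖` with `r = e^{-αδ} < 1`, and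
`∑_{k ≥ 1} k r^k = r (1-r)⁻²`.
-/

open ContinuousLinearMap

lemma ContinuousLinearMap.opNorm_sq_le_of_forall_norm_sq_le {𝕜 E F : Type*}
    [NontriviallyNormedField 𝕜] [SeminormedAddCommGroup E] [SeminormedAddCommGroup F]
    [NormedSpace 𝕜 E] [NormedSpace 𝕜 F] (T : E →L[𝕜] F) {K : ℝ} (hK : 0 ≤ K)
    (hT : ∀ x, ‖T x‖ ^ 2 ≤ K * ‖x‖ ^ 2) : ‖T‖ ^ 2 ≤ K := by
  have hT' : ‖T‖ ≤ √K := T.opNorm_le_bound (Real.sqrt_nonneg K) fun x => by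
    rw [← Real.sqrt_sq (norm_nonneg (T x)), ← Real.sqrt_sq (norm_nonneg x), ← Real.sqrt_mul hK]
    exact Real.sqrt_le_sqrt (hT x)
  calc ‖T‖ ^ 2 ≤ √K ^ 2 := by gcongr
    _ = K := Real.sq_sqrt hK

lemma ContinuousLinearMap.norm_adjoint_apply_apply_le {𝕜 E F : Type*} [RCLike 𝕜]
    [NormedAddCommGroup E] [InnerProductSpace 𝕜 E] [CompleteSpace E]
    [NormedAddCommGroup F] [InnerProductSpace 𝕜 F] [CompleteSpace F]
    (A : E →L[𝕜] F) {D : F → F} {c : ℝ} (hc : 0 ≤ c) (hD : ∀ y, ‖D y‖ ≤ c * ‖y‖) (x : E) :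
    ‖adjoint A (D (A x))‖ ≤ c * ‖A‖ ^ 2 * ‖x‖ :=
  calc ‖adjoint A (D (A x))‖ ≤ ‖A‖ * ‖D (A x)‖ := by
        simpa only [adjoint.norm_map] using (adjoint A).le_opNorm (D (A x))
    _ ≤ ‖A‖ * (c * (‖A‖ * ‖x‖)) := by gcongr; exact (hD _).trans (by gcongr; exact A.le_opNorm x)
    _ = c * ‖A‖ ^ 2 * ‖x‖ := by ring

lemma hasSum_succ_mul_geometric_succ {𝕜 : Type*} [NormedDivisionRing 𝕜] [CompleteSpace 𝕜]
    {r : 𝕜} (hr : ‖r‖ < 1) :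
    HasSum (fun n : ℕ => ((n + 1 : ℕ) : 𝕜) * r ^ (n + 1)) (r / (1 - r) ^ 2) := by
  simpa using (hasSum_nat_add_iff' (f := fun n : ℕ => (n : 𝕜) * r ^ n) 1).mpr
    (hasSum_coe_mul_geometric_of_norm_lt_one hr)

/-- `A m` models `A_m`, `D m` multiplication by `e^{-αm|·|}` on the range of `A_m`, and the sum
over `m ≥ 2` is indexed by `m = n + 2`. -/
theorem stmt_8_general (H : Type*) [NormedAddCommGroup H] [InnerProductSpace ℂ H] [CompleteSpace H]
    (δ α B : ℝ) (hδ : 0 < δ) (hα : 0 < α)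
    (A D : ℕ → H →L[ℂ] H)
    (hA : ∀ m : ℕ, 2 ≤ m → ∀ h : H,
      ‖A m h‖ ^ 2 ≤ 4 * ((m : ℝ) - 1) * ((m : ℝ) ^ 2)⁻¹ * B ^ 4 * ‖h‖ ^ 2)
    (hD : ∀ m : ℕ, 2 ≤ m → ∀ h : H,
      ‖D m h‖ ≤ Real.exp (-(α * δ * ((m : ℝ) - 1))) * ‖h‖)
    (Bop : H → H)
    (hBop : ∀ h : H, HasSum
      (fun n : ℕ => (((n + 2 : ℕ) : ℂ) ^ 2) •
        (ContinuousLinearMap.adjoint (A (n + 2))) (D (n + 2) (A (n + 2) h)))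
      (Bop h)) :
    ∀ h : H, ‖Bop h‖ ≤
      4 * B ^ 4 * Real.exp (-(α * δ)) * ((1 - Real.exp (-(α * δ))) ^ 2)⁻¹ * ‖h‖ := by
  intro h
  set r := Real.exp (-(α * δ))
  have hr : ‖r‖ < 1 := by
    rw [Real.norm_of_nonneg (Real.exp_nonneg _)]
    exact Real.exp_lt_one_iff.mpr (neg_neg_of_pos (mul_pos hα hδ))
  refine ((hBop h).norm_le_of_bounded
    ((hasSum_succ_mul_geometric_succ hr).mul_left (4 * B ^ 4 * ‖h‖)) fun n => ?_).trans_eq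
    (by ring)
  have hm : 2 ≤ n + 2 := by omega
  have hm1 : (((n + 2 : ℕ) : ℝ) - 1) = ((n + 1 : ℕ) : ℝ) := by push_cast; ring
  have hK : 0 ≤ 4 * (((n + 2 : ℕ) : ℝ) - 1) * (((n + 2 : ℕ) : ℝ) ^ 2)⁻¹ * B ^ 4 := by
    rw [hm1]; positivity
  have hexp : Real.exp (-(α * δ * (((n + 2 : ℕ) : ℝ) - 1))) = r ^ (n + 1) := by
    rw [hm1, ← Real.exp_nat_mul]; ring_nf
  calc ‖(((n + 2 : ℕ) : ℂ) ^ 2) • adjoint (A (n + 2)) (D (n + 2) (A (n + 2) h))‖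
      = ((n + 2 : ℕ) : ℝ) ^ 2 * ‖adjoint (A (n + 2)) (D (n + 2) (A (n + 2) h))‖ := by
        rw [norm_smul, norm_pow, Complex.norm_natCast]
    _ ≤ ((n + 2 : ℕ) : ℝ) ^ 2 * (r ^ (n + 1) * ‖A (n + 2)‖ ^ 2 * ‖h‖) := by
        gcongr
        exact (A (n + 2)).norm_adjoint_apply_apply_le (by positivity)
          (fun y => hexp ▸ hD _ hm y) h
    _ ≤ ((n + 2 : ℕ) : ℝ) ^ 2 * (r ^ (n + 1) *
          (4 * (((n + 2 : ℕ) : ℝ) - 1) * (((n + 2 : ℕ) : ℝ) ^ 2)⁻¹ * B ^ 4) * ‖h‖) := by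
        gcongr
        exact (A (n + 2)).opNorm_sq_le_of_forall_norm_sq_le hK (hA _ hm)
    _ = 4 * B ^ 4 * ‖h‖ * (((n + 1 : ℕ) : ℝ) * r ^ (n + 1)) := by
        rw [hm1]; field_simp

/-- The operator `B_α[h] = ∑_{m=2}^∞ m² A*_m[e^{-αm|·|} A_m[h]]` on `L²(S_δ)` is bounded
with norm at most `4B⁴ e^{-αδ}(1-e^{-αδ})⁻²`.  Here the Hilbert space `H` plays the role of
`L²(S_δ)`, `A m` the role of the operator `A_m` (which satisfies
`‖A_m h‖² ≤ 4(m-1)m⁻²B⁴‖h‖²`), and `D m` the role of multiplication by `e^{-αm|·|}` on the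
support of `A_m`'s output (where `m|ξ| ≥ (m-1)δ`, so `‖D m h‖ ≤ e^{-αδ(m-1)}‖h‖`); the sum
is indexed by `m = n + 2`, `n ∈ ℕ`. -/
theorem stmt_8 (H : Type*) [NormedAddCommGroup H] [InnerProductSpace ℂ H] [CompleteSpace H]
    (δ α B : ℝ) (hδ : 0 < δ) (hα : 0 < α) (hB : 1 ≤ B)
    (A D : ℕ → H →L[ℂ] H)
    (hA : ∀ m : ℕ, 2 ≤ m → ∀ h : H,
      ‖A m h‖ ^ 2 ≤ 4 * ((m : ℝ) - 1) * ((m : ℝ) ^ 2)⁻¹ * B ^ 4 * ‖h‖ ^ 2)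
    (hD : ∀ m : ℕ, 2 ≤ m → ∀ h : H,
      ‖D m h‖ ≤ Real.exp (-(α * δ * ((m : ℝ) - 1))) * ‖h‖)
    (Bop : H → H)
    (hBop : ∀ h : H, HasSum
      (fun n : ℕ => (((n + 2 : ℕ) : ℂ) ^ 2) •
        (ContinuousLinearMap.adjoint (A (n + 2))) (D (n + 2) (A (n + 2) h)))
      (Bop h)) :
    ∀ h : H, ‖Bop h‖ ≤
      4 * B ^ 4 * Real.exp (-(α * δ)) * ((1 - Real.exp (-(α * δ))) ^ 2)⁻¹ * ‖h‖ :=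
  stmt_8_general H δ α B hδ hα A D hA hD Bop hBop
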